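/- arXiv:1612.09519 — 3 statements merged into one kernel-verified Lean document; each statement's English description precedes it below -/
import Mathlib

section
/- Let W₁ = Tot(O_{P¹}(-1) ⊕ O_{P¹}(-1)) with charts U = {(z,u₁,u₂)}, V = {(ξ,v₁,v₂)} and transition (ξ,v₁,v₂) = (z⁻¹, zu₁, zu₂). Then H¹(W₁, TW₁) = 0: every 1-cocycle for the tangent bundle (a triple of holomorphic functions on U ∩ V, transformed by the Jacobian matrix of the transition) is a coboundary. In particular W₁ is rigid. -/
/-!
W₁ = Tot(O_{ℙ¹}(-1) ⊕ O_{ℙ¹}(-1)), charts U = {(z,u₁,u₂)}, V = {(ξ,v₁,v₂)},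
transition (ξ,v₁,v₂) = (z⁻¹, zu₁, zu₂).  A Čech 1-cocycle for TW₁ is a triple
of series Σ (a,b,c)_{l,i,j} z^l u₁^i u₂^j on U ∩ V; it is a coboundary iff
σ = α + T⁻¹β, i.e. Tσ = Tα + β, with α holomorphic on U (supported on l ≥ 0),
β holomorphic on V (supported, in U-coordinates, on l ≤ i + j, since
ξ^a v₁^b v₂^c = z^{b+c-a} u₁^b u₂^c), and T the Jacobian
[[-z⁻²,0,0],[u₁,z,0],[u₂,0,z]] of the transition.
Claim: H¹(W₁, TW₁) = 0, i.e. every 1-cocycle is a coboundary, i.e. the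
quotient by the coboundary subspace is trivial.  In particular W₁ is rigid.
-/

noncomputable section
namespace Stmt5

/-- Triples of series in z^l u₁^i u₂^j (vector-valued Čech 1-cochains). -/
abbrev S3 := (ℤ × ℕ × ℕ) → Fin 3 → ℂ

/-- Series holomorphic on U: only monomials with l ≥ 0. -/
def holU : Set S3 := {σ | ∀ p : ℤ × ℕ × ℕ, p.1 < 0 → σ p = 0}

/-- Series holomorphic on V, expanded in U-coordinates: only monomials with
l ≤ i + j (images of the V-monomials ξ^a v₁^b v₂^c = z^{b+c-a} u₁^b u₂^c). -/
def holV : Set S3 := {σ | ∀ p : ℤ × ℕ × ℕ, ((p.2.1 : ℤ) + (p.2.2 : ℤ)) < p.1 → σ p = 0}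

/-- The action of the Jacobian matrix T = [[-z⁻²,0,0],[u₁,z,0],[u₂,0,z]]
on vector-valued series, written coefficientwise. -/
def applyT (σ : S3) : S3 := fun p k =>
  if k = 0 then -σ (p.1 + 2, p.2.1, p.2.2) 0
  else if k = 1 then
    (if 1 ≤ p.2.1 then σ (p.1, p.2.1 - 1, p.2.2) 0 else 0) + σ (p.1 - 1, p.2.1, p.2.2) 1
  else
    (if 1 ≤ p.2.2 then σ (p.1, p.2.1, p.2.2 - 1) 0 else 0) + σ (p.1 - 1, p.2.1, p.2.2) 2

/-- The coboundary subspace: cocycles of the form α + T⁻¹β. -/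
def coboundaries : Submodule ℂ S3 :=
  Submodule.span ℂ {σ | ∃ α β, α ∈ holU ∧ β ∈ holV ∧ applyT σ = applyT α + β}

/-- applyT is additive in the obvious sense. -/
lemma applyT_add (x y : S3) : applyT (fun p k => x p k + y p k)
    = fun p k => applyT x p k + applyT y p k := by
  funext p k
  simp only [applyT]
  split_ifs <;> ring

/-- Every cochain lies in the generating set of coboundaries. -/
lemma mem_gen (σ : S3) :
    σ ∈ {σ : S3 | ∃ α β, α ∈ holU ∧ β ∈ holV ∧ applyT σ = applyT α + β} := by
  set α : S3 := fun p => if 0 ≤ p.1 then σ p else 0 with hα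
  set τ : S3 := fun p k => σ p k - α p k with hτ
  have hτ0 : ∀ p : ℤ × ℕ × ℕ, 0 ≤ p.1 → τ p = 0 := by
    intro p hp
    funext k
    simp [hτ, hα, hp]
  refine ⟨α, applyT τ, ?_, ?_, ?_⟩
  · intro p hp
    simp [hα, not_le.mpr hp]
  · rintro ⟨l, i, j⟩ h
    have hl : (1 : ℤ) ≤ l := by
      have : (0:ℤ) ≤ (i:ℤ) + (j:ℤ) := by positivity
      omega
    funext k
    fin_cases k
    · norm_num [applyT, Fin.ext_iff]
      rw [hτ0 (l + 2, i, j) (by omega)]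
      simp
    · norm_num [applyT, Fin.ext_iff]
      rw [hτ0 (l - 1, i, j) (by omega)]
      split_ifs with h1
      · rw [hτ0 (l, i - 1, j) (by omega)]; simp
      · simp
    · norm_num [applyT, Fin.ext_iff]
      rw [hτ0 (l - 1, i, j) (by omega)]
      split_ifs with h1
      · rw [hτ0 (l, i, j - 1) (by omega)]; simp
      · simp
  · have : σ = fun p k => α p k + τ p k := by
      funext p k; simp [hτ]
    calc applyT σ = applyT (fun p k => α p k + τ p k) := by rw [← this]
      _ = fun p k => applyT α p k + applyT τ p k := applyT_add α τ
      _ = applyT α + applyT τ := rfl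

/-- H¹(W₁, TW₁) = 0: every 1-cocycle is a coboundary, so W₁ is rigid. -/
theorem stmt_5 : Subsingleton (S3 ⧸ coboundaries) := by
  have htop : coboundaries = ⊤ := by
    rw [eq_top_iff]
    intro σ _
    exact Submodule.subset_span (mem_gen σ)
  rw [htop]
  infer_instance
end Stmt5
end
end

section
/- Let 𝒲₂ be the threefold obtained by gluing C³_{z,u₁,u₂} and C³_{ξ,v₁,v₂} along C* × C² via (ξ,v₁,v₂) = (z⁻¹, z²u₁ + zu₂, u₂). Then H¹(𝒲₂, O(-4)) ≠ 0: the 1-cocycle z⁻¹ (for the line bundle with transition z⁻⁴) is not a coboundary. Concretely, there exist no holomorphic functions α(z,u₁,u₂) on C³ and β(ξ,v₁,v₂) on C³ such that z⁻¹ = α(z,u₁,u₂) + z⁻⁴ β(z⁻¹, z²u₁ + zu₂, u₂) on C* × C². -/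
open Filter Topology Metric Bornology Set

theorem stmt_8 :
    ¬ ∃ α β : ℂ × ℂ × ℂ → ℂ, Differentiable ℂ α ∧ Differentiable ℂ β ∧
      ∀ z u₁ u₂ : ℂ, z ≠ 0 →
        z⁻¹ = α (z, u₁, u₂) + (z ^ 4)⁻¹ * β (z⁻¹, z ^ 2 * u₁ + z * u₂, u₂) := by
  rintro ⟨α, β, hα, hβ, h⟩
  set f : ℂ → ℂ := fun z => α (z, 0, 0) with hf_def
  set g : ℂ → ℂ := fun w => β (w, 0, 0) with hg_def
  have hf : Differentiable ℂ f := hα.comp (by fun_prop)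
  have hg : Differentiable ℂ g := hβ.comp (by fun_prop)
  set F : ℂ → ℂ := fun z => z - z ^ 4 * g z with hF_def
  have hFc : Continuous F := by
    apply Continuous.sub continuous_id
    exact (continuous_pow 4).mul hg.continuous
  -- key identity
  have key : ∀ z : ℂ, z ≠ 0 → f z⁻¹ = F z := by
    intro z hz
    have h' := h z⁻¹ 0 0 (inv_ne_zero hz)
    simp only [inv_inv, mul_zero, add_zero, zero_add] at h'
    have h4 : ((z⁻¹) ^ 4)⁻¹ = z ^ 4 := by
      field_simp
    rw [h4] at h'
    simp only [hF_def, hf_def, hg_def]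
    linear_combination -h'
  -- f is bounded
  have hb : IsBounded (range f) := by
    obtain ⟨C₁, hC₁⟩ := (isCompact_closedBall (0:ℂ) 1).exists_bound_of_continuousOn
      hf.continuous.continuousOn
    obtain ⟨C₂, hC₂⟩ := (isCompact_closedBall (0:ℂ) 1).exists_bound_of_continuousOn
      hFc.continuousOn
    rw [isBounded_iff_forall_norm_le]
    refine ⟨max C₁ C₂, ?_⟩
    rintro _ ⟨z, rfl⟩
    by_cases hz : ‖z‖ ≤ 1
    · exact le_max_of_le_left (hC₁ z (by simpa [mem_closedBall, dist_eq_norm] using hz))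
    · have hz0 : z ≠ 0 := by
        intro h0; simp [h0] at hz
      have hzi : z⁻¹ ∈ closedBall (0:ℂ) 1 := by
        simp only [mem_closedBall, dist_zero_right, norm_inv]
        rw [inv_le_one_iff₀]
        right; linarith [not_le.1 hz]
      have := key z⁻¹ (inv_ne_zero hz0)
      rw [inv_inv] at this
      rw [this]
      exact le_max_of_le_right (hC₂ _ hzi)
  have hconst : ∀ z : ℂ, f z = f 0 := fun z => hf.apply_eq_apply_of_bounded hb z 0
  -- F = f 0 on punctured nhds, F 0 = 0, so f 0 = 0
  have hFz : ∀ z : ℂ, z ≠ 0 → F z = f 0 := by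
    intro z hz
    rw [← key z hz, hconst]
  have hf0 : f 0 = 0 := by
    have t1 : Tendsto F (𝓝[≠] (0:ℂ)) (𝓝 (F 0)) :=
      (hFc.tendsto 0).mono_left nhdsWithin_le_nhds
    have t2 : Tendsto F (𝓝[≠] (0:ℂ)) (𝓝 (f 0)) := by
      apply Tendsto.congr' _ tendsto_const_nhds
      filter_upwards [self_mem_nhdsWithin] with z hz
      exact (hFz z hz).symm
    have : F 0 = f 0 := tendsto_nhds_unique t1 t2
    have hF0 : F 0 = 0 := by simp [hF_def]
    rw [← this, hF0]
  -- g z = z⁻³ for z ≠ 0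
  have hgz : ∀ z : ℂ, z ≠ 0 → g z = (z ^ 3)⁻¹ := by
    intro z hz
    have := hFz z hz
    rw [hf0, hF_def] at this
    have h5 : z ^ 4 * g z = z := by linear_combination -this
    have h6 : g z * z ^ 3 = 1 := mul_left_cancel₀ hz (by linear_combination h5)
    field_simp
    linear_combination h6
  -- contradiction via continuity of g at 0
  set G : ℂ → ℂ := fun z => z ^ 3 * g z with hG_def
  have hGc : Continuous G := (continuous_pow 3).mul hg.continuous
  have t1 : Tendsto G (𝓝[≠] (0:ℂ)) (𝓝 (G 0)) :=
    (hGc.tendsto 0).mono_left nhdsWithin_le_nhds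
  have t2 : Tendsto G (𝓝[≠] (0:ℂ)) (𝓝 1) := by
    apply Tendsto.congr' _ tendsto_const_nhds
    filter_upwards [self_mem_nhdsWithin] with z hz
    rw [hG_def]
    simp only [hgz z hz]
    exact (mul_inv_cancel₀ (pow_ne_zero 3 hz)).symm
  have : G 0 = 1 := tendsto_nhds_unique t1 t2
  simp [hG_def] at this
end

section
/- The pullback under the projection p : W₃ → Z₍₋₁₎, (z,u₁,u₂) ↦ (z,u₂) (in canonical coordinates, with Z₍₋₁₎ the zero section u₁ = 0), of the non-algebraic holomorphic rank-2 bundle E on Z₍₋₁₎ (transition matrix [[z, z⁻¹e^{u}],[0, z⁻¹]]) is a holomorphic rank-2 bundle on W₃ that is not algebraic; equivalently, the class of z⁻² e^{u₂} in H¹(W₃, O(-2)) (transition z⁻², where O(-2) means the pullback line bundle) is not representable by any polynomial cocycle. -/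
/-!
W₃ = Tot(O_{ℙ¹}(-3) ⊕ O_{ℙ¹}(1)) with transition
(ξ,v₁,v₂) = (z⁻¹, z³u₁, z⁻¹u₂); the projection p : W₃ → Z₍₋₁₎,
(z,u₁,u₂) ↦ (z,u₂), pulls back the non-algebraic bundle of Z₍₋₁₎
(transition [[z, z⁻¹e^u],[0,z⁻¹]]).  H¹(W₃, p*O(-2)) is computed from series
Σ σ_{l,i,j} z^l u₁^i u₂^j modulo series supported on trivial monomials: the
monomial z^l u₁^i u₂^j is trivial iff l ≥ 0 (holomorphic on U) or
l ≤ 3i - j - 2 (its transform z² z^l u₁^i u₂^j = ξ^{-l-2+3i-j} v₁^i v₂^j is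
holomorphic on V).  Claim: the class of z⁻² e^{u₂} is not the class of any
polynomial (finitely supported) cocycle, so the pullback bundle p*E is
holomorphic but not algebraic.
-/

noncomputable section
namespace Stmt13

def coboundaries : Submodule ℂ ((ℤ × ℕ × ℕ) → ℂ) where
  carrier := {σ | ∀ p : ℤ × ℕ × ℕ,
    ¬ (0 ≤ p.1 ∨ p.1 ≤ 3 * (p.2.1 : ℤ) - (p.2.2 : ℤ) - 2) → σ p = 0}
  add_mem' := fun ha hb p hp => by simp [ha p hp, hb p hp]
  zero_mem' := fun p _ => rfl
  smul_mem' := fun c σ hσ p hp => by simp [hσ p hp]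

/-- The series z⁻² e^{u₂} = Σ_{n≥0} z⁻² u₂ⁿ/n!. -/
def expSeries : (ℤ × ℕ × ℕ) → ℂ :=
  fun p => if p.1 = -2 ∧ p.2.1 = 0 then ((p.2.2.factorial : ℂ))⁻¹ else 0

/-- The class of z⁻²e^{u₂} in H¹(W₃, p*O(-2)) has no polynomial
representative: the pullback bundle is holomorphic but not algebraic. -/
theorem stmt_13 :
    ∀ σ : (ℤ × ℕ × ℕ) → ℂ, (Function.support σ).Finite →
      (Submodule.Quotient.mk expSeries : ((ℤ × ℕ × ℕ) → ℂ) ⧸ coboundaries) ≠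
        Submodule.Quotient.mk σ := by
  intro σ hfin heq
  have hmem : expSeries - σ ∈ coboundaries :=
    (Submodule.Quotient.eq coboundaries).mp heq
  have key : ∀ n : ℕ, 1 ≤ n → σ (-2, 0, n) ≠ 0 := by
    intro n hn
    have hp : ¬ (0 ≤ (-2 : ℤ) ∨ (-2 : ℤ) ≤ 3 * ((0 : ℕ) : ℤ) - (n : ℤ) - 2) := by
      push_neg
      constructor
      · norm_num
      · push_cast; omega
    have := hmem (-2, 0, n) hp
    have hexp : expSeries (-2, 0, n) = ((n.factorial : ℂ))⁻¹ := by
      simp [expSeries]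
    have hne : expSeries (-2, 0, n) ≠ 0 := by
      rw [hexp]
      exact inv_ne_zero (Nat.cast_ne_zero.mpr n.factorial_ne_zero)
    intro h0
    apply hne
    have : expSeries (-2, 0, n) - σ (-2, 0, n) = 0 := this
    rw [h0, sub_zero] at this
    exact this
  have hinj : Function.Injective (fun n : ℕ => ((-2 : ℤ), (0 : ℕ), n + 1)) := by
    intro a b hab
    simpa using hab
  have : Set.Infinite (Function.support σ) := by
    apply Set.infinite_of_injective_forall_mem (f := fun n : ℕ => ((-2 : ℤ), (0 : ℕ), n + 1)) hinj
    intro n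
    exact key (n + 1) (Nat.le_add_left 1 n)
  exact this hfin

end Stmt13
end
end
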